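/- arXiv:1209.3980 — 3 statements merged into one kernel-verified Lean document; each statement's English description precedes it below -/
import Mathlib

section
/- Let A be an abelian group and let Φ : P^n_o → A be a valuation (with the convention Φ(∅) = 0). Then Φ satisfies the inclusion-exclusion principle: for all m ∈ N and all P₁, …, P_m ∈ P^n_o with P₁ ∪ … ∪ P_m ∈ P^n_o, one has Φ(P₁ ∪ … ∪ P_m) = Σ_{∅ ≠ S ⊆ {1,…,m}} (−1)^{|S|−1} Φ(∩_{i∈S} P_i). -/
open MeasureTheory Metric
open scoped RealInnerProductSpace Pointwise

noncomputable section

/-- Euclidean `n`-space. -/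
abbrev Eucl (n : ℕ) : Type := EuclideanSpace ℝ (Fin n)

/-- A convex body: a nonempty compact convex subset of `ℝⁿ`. -/
def IsConvexBody {n : ℕ} (K : Set (Eucl n)) : Prop :=
  K.Nonempty ∧ IsCompact K ∧ Convex ℝ K

/-- A convex body containing the origin. -/
def IsConvexBodyO {n : ℕ} (K : Set (Eucl n)) : Prop :=
  IsConvexBody K ∧ (0 : Eucl n) ∈ K

/-- A convex polytope: the convex hull of a finite nonempty set of points. -/
def IsPolytope {n : ℕ} (P : Set (Eucl n)) : Prop :=
  ∃ S : Finset (Eucl n), S.Nonempty ∧ P = convexHull ℝ (S : Set (Eucl n))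

/-- A convex polytope containing the origin. -/
def IsPolytopeO {n : ℕ} (P : Set (Eucl n)) : Prop :=
  IsPolytope P ∧ (0 : Eucl n) ∈ P

/-- The support function `h(K, u) = sup_{x ∈ K} ⟨x, u⟩`. -/
def suppFn {n : ℕ} (K : Set (Eucl n)) (u : Eucl n) : ℝ :=
  sSup ((fun x => ⟪x, u⟫) '' K)

/-- The dimension of a convex set: the dimension of its affine hull. -/
def setDim {n : ℕ} (P : Set (Eucl n)) : ℕ :=
  Module.finrank ℝ (affineSpan ℝ P).direction

/-- `h(I_p⁺ K, u)^p = max_{x ∈ K} ⟨x, u⟩₊^p`. -/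
def IppF {n : ℕ} (p : ℝ) (K : Set (Eucl n)) (u : Eucl n) : ℝ :=
  sSup ((fun x => (max ⟪x, u⟫ 0) ^ p) '' K)

/-- `h(I_p⁻ K, u)^p = max_{x ∈ K} ⟨x, u⟩₋^p`. -/
def ImpF {n : ℕ} (p : ℝ) (K : Set (Eucl n)) (u : Eucl n) : ℝ :=
  sSup ((fun x => (max (-⟪x, u⟫) 0) ^ p) '' K)

/-- `(J_p⁺ K)(u) = min_{x ∈ K} ⟨x, u⟩₊^p`. -/
def JppF {n : ℕ} (p : ℝ) (K : Set (Eucl n)) (u : Eucl n) : ℝ :=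
  sInf ((fun x => (max ⟪x, u⟫ 0) ^ p) '' K)

/-- `(J_p⁻ K)(u) = min_{x ∈ K} ⟨x, u⟩₋^p`. -/
def JmpF {n : ℕ} (p : ℝ) (K : Set (Eucl n)) (u : Eucl n) : ℝ :=
  sInf ((fun x => (max (-⟪x, u⟫) 0) ^ p) '' K)

/-- The face `F(K, v) = {x ∈ K : ⟨x, v⟩ = h(K, v)}`. -/
def face {n : ℕ} (K : Set (Eucl n)) (v : Eucl n) : Set (Eucl n) :=
  {x ∈ K | ⟪x, v⟫ = suppFn K v}

/-- `h(E_p⁺ K, u)^p = (1/2) Σ_{v ∈ S¹, h(K,v) = 0} max_{x ∈ F(K,v)} ⟨x, u⟩₊^p`. -/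
def EppF {n : ℕ} (p : ℝ) (K : Set (Eucl n)) (u : Eucl n) : ℝ :=
  (1 / 2) * ∑' v : {v : Eucl n // ‖v‖ = 1 ∧ suppFn K v = 0},
    sSup ((fun x => (max ⟪x, u⟫ 0) ^ p) '' face K v.1)

/-- `h(E_p⁻ K, u)^p = (1/2) Σ_{v ∈ S¹, h(K,v) = 0} max_{x ∈ F(K,v)} ⟨x, u⟩₋^p`. -/
def EmpF {n : ℕ} (p : ℝ) (K : Set (Eucl n)) (u : Eucl n) : ℝ :=
  (1 / 2) * ∑' v : {v : Eucl n // ‖v‖ = 1 ∧ suppFn K v = 0},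
    sSup ((fun x => (max (-⟪x, u⟫) 0) ^ p) '' face K v.1)

/-- `(F_p⁺ K)(u) = (1/2) Σ_{v ∈ S¹, h(K,v) = 0} min_{x ∈ F(K,v)} ⟨x, u⟩₊^p`. -/
def FppF {n : ℕ} (p : ℝ) (K : Set (Eucl n)) (u : Eucl n) : ℝ :=
  (1 / 2) * ∑' v : {v : Eucl n // ‖v‖ = 1 ∧ suppFn K v = 0},
    sInf ((fun x => (max ⟪x, u⟫ 0) ^ p) '' face K v.1)

/-- `(F_p⁻ K)(u) = (1/2) Σ_{v ∈ S¹, h(K,v) = 0} min_{x ∈ F(K,v)} ⟨x, u⟩₋^p`. -/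
def FmpF {n : ℕ} (p : ℝ) (K : Set (Eucl n)) (u : Eucl n) : ℝ :=
  (1 / 2) * ∑' v : {v : Eucl n // ‖v‖ = 1 ∧ suppFn K v = 0},
    sInf ((fun x => (max (-⟪x, u⟫) 0) ^ p) '' face K v.1)

/-- The maximum norm over the unit sphere. -/
def sphSup {n : ℕ} (f : Eucl n → ℝ) : ℝ :=
  ⨆ u : Metric.sphere (0 : Eucl n) 1, |f u.1|

/-- The standard simplex `Tⁿ = conv{o, e₁, …, e_n}`. -/
def stdT (n : ℕ) : Set (Eucl n) :=
  convexHull ℝ (insert (0 : Eucl n) (Set.range fun i : Fin n => EuclideanSpace.single i (1 : ℝ)))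

/-- The simplex `T̃ⁿ⁻¹ = conv{e₁, …, e_n}`. -/
def tilT (n : ℕ) : Set (Eucl n) :=
  convexHull ℝ (Set.range fun i : Fin n => EuclideanSpace.single i (1 : ℝ))

/-!
Induction on the number of polytopes. By Minkowski–Weyl each `P i` is cut out by finitely many
constraints `⟪a, x⟫ ≤ b`, with `b ≥ 0` because `0 ∈ P i`. Cutting along a hyperplane `v^⊥` through
the origin stays inside `P^n_o`, and the valuation property gives
`Φ X = Φ (X ∩ {⟪v, ·⟫ ≥ 0}) + Φ (X ∩ {⟪v, ·⟫ ≤ 0}) - Φ (X ∩ v^⊥)`, so inclusion–exclusion for the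
family follows from inclusion–exclusion for the three cut families. After cutting along every
constraint normal `a` and every normal `b' • a - b • a'` of a hyperplane through `0` and the
intersection of two constraint hyperplanes, all these functionals have constant sign on the union.
Then one of the polytopes, `P k`, is covered by the others, and inclusion–exclusion for the family
reduces to inclusion–exclusion for the families `P i` and `P k ∩ P i`, `i ≠ k`, which have one
member fewer and unions `⋃ P i` and `P k` in `P^n_o`.
-/

section Polyhedron

open Filter Topology

variable {E : Type*} [NormedAddCommGroup E] [InnerProductSpace ℝ E]

def polyhedron (R : Finset (E × ℝ)) : Set E := {x | ∀ p ∈ R, ⟪p.1, x⟫ ≤ p.2}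

@[simp]
lemma mem_polyhedron {R : Finset (E × ℝ)} {x : E} :
    x ∈ polyhedron R ↔ ∀ p ∈ R, ⟪p.1, x⟫ ≤ p.2 :=
  Iff.rfl

lemma polyhedron_union [DecidableEq (E × ℝ)] (R S : Finset (E × ℝ)) :
    polyhedron (R ∪ S) = polyhedron R ∩ polyhedron S := by
  ext x
  simp [or_imp, forall_and]

lemma polyhedron_eq_biInter (R : Finset (E × ℝ)) :
    polyhedron R = ⋂ p ∈ R, {x | ⟪p.1, x⟫ ≤ p.2} := by
  ext x
  simp

lemma isClosed_polyhedron (R : Finset (E × ℝ)) : IsClosed (polyhedron R) := by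
  rw [polyhedron_eq_biInter]
  exact isClosed_biInter fun p _ => isClosed_le (by fun_prop) continuous_const

lemma convex_polyhedron (R : Finset (E × ℝ)) : Convex ℝ (polyhedron R) := by
  rw [polyhedron_eq_biInter]
  exact convex_iInter₂ fun p _ => convex_halfSpace_le (innerₗ E p.1).isLinear p.2

lemma zero_mem_polyhedron_iff {R : Finset (E × ℝ)} : 0 ∈ polyhedron R ↔ ∀ p ∈ R, 0 ≤ p.2 := by
  simp

/- Moving from `x` along `v` keeps the active constraints tight and, for small steps, the
inactive ones slack, so `x ± ε • v` both lie in the polyhedron. -/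
lemma eq_zero_of_mem_extremePoints_polyhedron {R : Finset (E × ℝ)} {x v : E}
    (hx : x ∈ (polyhedron R).extremePoints ℝ) (hv : ∀ p ∈ R, ⟪p.1, x⟫ = p.2 → ⟪p.1, v⟫ = 0) :
    v = 0 := by
  have hnear : ∀ᶠ t in 𝓝 (0 : ℝ), x + t • v ∈ polyhedron R := by
    simp only [mem_polyhedron]
    refine (eventually_all_finset R).2 fun p hp => ?_
    rcases (hx.1 p hp).eq_or_lt with h | h
    · exact .of_forall fun t => by simp [inner_add_right, inner_smul_right, hv p hp h, h]
    · have hc : Continuous fun t : ℝ => ⟪p.1, x + t • v⟫ := by fun_prop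
      exact ((hc.tendsto 0).eventually (gt_mem_nhds (by simpa using h))).mono fun _ => le_of_lt
  obtain ⟨ε, hε, hball⟩ := Metric.eventually_nhds_iff.1 hnear
  have hpos := hball (y := ε / 2) (by rw [Real.dist_0_eq_abs, abs_of_pos (by positivity)]; linarith)
  have hneg := hball (y := -(ε / 2)) (by
    rw [Real.dist_0_eq_abs, abs_neg, abs_of_pos (by positivity)]; linarith)
  have hmid : x ∈ openSegment ℝ (x + -(ε / 2) • v) (x + (ε / 2) • v) :=
    ⟨1 / 2, 1 / 2, by norm_num, by norm_num, by norm_num, by module⟩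
  have hsmul : -(ε / 2) • v = 0 := by
    simpa using hx.2 hneg hpos hmid
  exact (smul_eq_zero.1 hsmul).resolve_left (by linarith)

lemma finite_extremePoints_polyhedron (R : Finset (E × ℝ)) :
    ((polyhedron R).extremePoints ℝ).Finite := by
  classical
  set active : E → Finset (E × ℝ) := fun x => R.filter fun p => ⟪p.1, x⟫ = p.2
  refine Set.Finite.of_finite_image (f := active) (R.powerset.finite_toSet.subset ?_) ?_
  · rintro _ ⟨x, -, rfl⟩
    exact Finset.mem_coe.2 (Finset.mem_powerset.2 (Finset.filter_subset _ _))
  · intro x hx y _ hxy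
    have hyx : y - x = 0 := eq_zero_of_mem_extremePoints_polyhedron hx fun p hp hpx => by
      have hpy : p ∈ active y := hxy ▸ Finset.mem_filter.2 ⟨hp, hpx⟩
      rw [inner_sub_right, hpx, (Finset.mem_filter.1 hpy).2, sub_self]
    exact (sub_eq_zero.1 hyx).symm

lemma exists_finset_eq_convexHull_of_isCompact {R : Finset (E × ℝ)}
    (hR : IsCompact (polyhedron R)) : ∃ V : Finset E, polyhedron R = convexHull ℝ (V : Set E) := by
  have hfin := finite_extremePoints_polyhedron R
  refine ⟨hfin.toFinset, ?_⟩
  rw [Set.Finite.coe_toFinset, ← (hfin.isCompact_convexHull ℝ).isClosed.closure_eq]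
  exact (closure_convexHull_extremePoints hR (convex_polyhedron R)).symm

lemma convexHull_subset_setOf_inner_sub_le {V : Set E} {c y : E} (h : ∀ v ∈ V, ⟪v - c, y⟫ ≤ 1) :
    convexHull ℝ V ⊆ {x | ⟪x - c, y⟫ ≤ 1} := by
  refine convexHull_min h ?_
  have hhalf : {x : E | ⟪x - c, y⟫ ≤ 1} = {x | ⟪y, x⟫ ≤ 1 + ⟪y, c⟫} := by
    ext x
    simp only [Set.mem_ofPred_eq, real_inner_comm y, inner_sub_right]
    constructor <;> intro h <;> linarith
  rw [hhalf]
  exact convex_halfSpace_le (innerₗ E y).isLinear _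

end Polyhedron

section MinkowskiWeyl

variable {E : Type*} [NormedAddCommGroup E] [InnerProductSpace ℝ E] [FiniteDimensional ℝ E]

lemma isCompact_polyhedron_image_sub_one [DecidableEq (E × ℝ)] {V : Finset E} {c : E}
    (hc : c ∈ interior (convexHull ℝ (V : Set E))) :
    IsCompact (polyhedron (V.image fun v => (v - c, (1 : ℝ)))) := by
  obtain ⟨r, hr, hball⟩ := Metric.isOpen_iff.1 isOpen_interior c hc
  refine (isCompact_closedBall 0 (2 / r)).of_isClosed_subset (isClosed_polyhedron _)
    fun y hy => ?_
  rcases eq_or_ne y 0 with rfl | hy0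
  · simpa using by positivity
  have hy' : 0 < ‖y‖ := norm_pos_iff.2 hy0
  have hx : c + (r / (2 * ‖y‖)) • y ∈ convexHull ℝ (V : Set E) := interior_subset <| hball <| by
    rw [Metric.mem_ball, dist_self_add_left, norm_smul, Real.norm_of_nonneg (by positivity)]
    field_simp
    linarith
  have := convexHull_subset_setOf_inner_sub_le (fun v hv => by
    simpa using hy (v - c, 1) (Finset.mem_image_of_mem _ hv)) hx
  rw [Set.mem_ofPred_eq, add_sub_cancel_left, real_inner_smul_left,
    real_inner_self_eq_norm_sq] at this
  rw [mem_closedBall_zero_iff, le_div_iff₀ hr]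
  field_simp at this
  nlinarith

/- Polar duality about `c`: the polar body `D` of `convexHull V` is a bounded polyhedron, so it is
the hull of finitely many points `W`, and the constraints `⟪w, x - c⟫ ≤ 1`, `w ∈ W`, cut out
`convexHull V` again. -/
lemma exists_polyhedron_eq_convexHull_of_mem_interior (V : Finset E) {c : E}
    (hc : c ∈ interior (convexHull ℝ (V : Set E))) :
    ∃ R : Finset (E × ℝ), convexHull ℝ (V : Set E) = polyhedron R := by
  classical
  set D := polyhedron (V.image fun v => (v - c, (1 : ℝ)))
  have mem_D : ∀ y, y ∈ D ↔ ∀ v ∈ V, ⟪v - c, y⟫ ≤ 1 := by simp [D]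
  obtain ⟨W, hW⟩ : ∃ W : Finset E, D = convexHull ℝ (W : Set E) :=
    exists_finset_eq_convexHull_of_isCompact (isCompact_polyhedron_image_sub_one hc)
  refine ⟨W.image fun w => (w, 1 + ⟪w, c⟫), Set.Subset.antisymm ?_ ?_⟩
  · intro x hx
    simp only [mem_polyhedron, Finset.forall_mem_image]
    intro w hw
    have := convexHull_subset_setOf_inner_sub_le
      ((mem_D w).1 (hW ▸ subset_convexHull ℝ _ hw)) hx
    rw [Set.mem_ofPred_eq, inner_sub_left, real_inner_comm w x, real_inner_comm w c] at this
    linarith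
  · intro x hx
    by_contra hxQ
    obtain ⟨f, u, hfQ, hfx⟩ := geometric_hahn_banach_closed_point (convex_convexHull ℝ _)
      (V.finite_toSet.isCompact_convexHull ℝ).isClosed hxQ
    have hu : 0 < u - f c := sub_pos.2 (hfQ c (interior_subset hc))
    set y := (u - f c)⁻¹ • (InnerProductSpace.toDual ℝ E).symm f
    have hy (z : E) : ⟪z - c, y⟫ = (f z - f c) / (u - f c) := by
      rw [real_inner_comm, real_inner_smul_left, InnerProductSpace.toDual_symm_apply, map_sub,
        div_eq_inv_mul]
    have hyD : y ∈ D := (mem_D y).2 fun v hv => by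
      rw [hy, div_le_one hu]
      linarith [hfQ v (subset_convexHull ℝ _ hv)]
    have hWx : convexHull ℝ (W : Set E) ⊆ {y | ⟪x - c, y⟫ ≤ 1} := by
      refine convexHull_min (fun w hw => ?_) (convex_halfSpace_le (innerₗ E (x - c)).isLinear 1)
      have := hx (w, 1 + ⟪w, c⟫) (Finset.mem_image_of_mem _ hw)
      simp only [Set.mem_ofPred_eq, inner_sub_left, real_inner_comm w] at this ⊢
      linarith
    have hxy := hWx (hW ▸ hyD)
    rw [Set.mem_ofPred_eq, hy, div_le_one hu] at hxy
    linarith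

lemma exists_polyhedron_eq_setOf_sub_mem (K : Submodule ℝ E) (v₀ : E) :
    ∃ R : Finset (E × ℝ), polyhedron R = {x | x - v₀ ∈ K} := by
  classical
  obtain ⟨B, hB⟩ : Kᗮ.FG := IsNoetherian.noetherian _
  have mem_K (z : E) : z ∈ K ↔ ∀ b ∈ B, ⟪b, z⟫ = 0 := by
    rw [← K.orthogonal_orthogonal, ← hB, Submodule.mem_orthogonal]
    refine ⟨fun h b hb => h b (Submodule.subset_span hb), fun h u hu => ?_⟩
    induction hu using Submodule.span_induction with
    | mem b hb => exact h b hb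
    | zero => simp
    | add u w _ _ hu hw => simp [inner_add_left, hu, hw]
    | smul a u _ hu => simp [inner_smul_left, hu]
  refine ⟨B.image (fun b => (b, ⟪b, v₀⟫)) ∪ B.image (fun b => (-b, -⟪b, v₀⟫)), ?_⟩
  ext x
  simp only [polyhedron_union, Set.mem_inter_iff, mem_polyhedron, Finset.forall_mem_image,
    inner_neg_left, neg_le_neg_iff, Set.mem_ofPred_eq, mem_K, inner_sub_right, sub_eq_zero]
  exact ⟨fun h b hb => le_antisymm (h.1 hb) (h.2 hb),
    fun h => ⟨fun b hb => (h b hb).le, fun b hb => (h b hb).ge⟩⟩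

lemma affineSpan_union_image_add_eq_top {V B : Set E} {v₀ : E} (hv₀ : v₀ ∈ V)
    (hB : Submodule.span ℝ B = (vectorSpan ℝ V)ᗮ) : affineSpan ℝ (V ∪ (v₀ + ·) '' B) = ⊤ := by
  rw [AffineSubspace.affineSpan_eq_top_iff_vectorSpan_eq_top_of_nonempty ℝ E E ⟨v₀, .inl hv₀⟩,
    eq_top_iff, ← (vectorSpan ℝ V).sup_orthogonal_of_hasOrthogonalProjection, ← hB]
  refine sup_le (vectorSpan_mono ℝ Set.subset_union_left) (Submodule.span_le.2 fun b hb => ?_)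
  have hb' : v₀ + b ∈ V ∪ (v₀ + ·) '' B := .inr ⟨b, hb, rfl⟩
  simpa using vsub_mem_vectorSpan ℝ hb' (Or.inl hv₀ : v₀ ∈ V ∪ (v₀ + ·) '' B)

/- The affine map `x ↦ v₀ + proj (x - v₀)`, with `proj` the orthogonal projection onto
`vectorSpan ℝ V`, fixes `V` and sends the added points `v₀ + b` to `v₀`. -/
lemma convexHull_eq_convexHull_union_image_add_inter {V B : Set E} {v₀ : E} (hv₀ : v₀ ∈ V)
    (hB : B ⊆ (vectorSpan ℝ V)ᗮ) :
    convexHull ℝ V = convexHull ℝ (V ∪ (v₀ + ·) '' B) ∩ {x | x - v₀ ∈ vectorSpan ℝ V} := by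
  set W := vectorSpan ℝ V
  let π : E →ᵃ[ℝ] E :=
    W.starProjection.toLinearMap.toAffineMap + AffineMap.const ℝ E (v₀ - W.starProjection v₀)
  have hπ (x : E) : π x = v₀ + W.starProjection (x - v₀) := by
    simp only [π, AffineMap.coe_add, Pi.add_apply, LinearMap.coe_toAffineMap,
      ContinuousLinearMap.coe_coe, AffineMap.const_apply, map_sub]
    abel
  have hπ_fix {x : E} (hx : x - v₀ ∈ W) : π x = x := by
    rw [hπ, W.starProjection_eq_self_iff.2 hx, add_sub_cancel]
  have hπV : π '' (V ∪ (v₀ + ·) '' B) ⊆ V := by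
    rintro _ ⟨x, hx | ⟨b, hb, rfl⟩, rfl⟩
    · rwa [hπ_fix (vsub_mem_vectorSpan ℝ hx hv₀)]
    · rwa [hπ, add_sub_cancel_left, W.starProjection_apply_eq_zero_iff.2 (hB hb), add_zero]
  refine Set.Subset.antisymm (Set.subset_inter (convexHull_mono Set.subset_union_left)
    fun x hx => ?_) ?_
  · simpa [direction_affineSpan] using AffineSubspace.vsub_mem_direction
      (convexHull_subset_affineSpan _ hx) (mem_affineSpan ℝ hv₀)
  · rintro x ⟨hx, hxW⟩
    rw [← hπ_fix hxW]
    exact convexHull_mono hπV (π.image_convexHull _ ▸ ⟨x, hx, rfl⟩)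

theorem exists_polyhedron_eq_convexHull (V : Finset E) :
    ∃ R : Finset (E × ℝ), convexHull ℝ (V : Set E) = polyhedron R := by
  classical
  rcases V.eq_empty_or_nonempty with rfl | ⟨v₀, hv₀⟩
  · exact ⟨{(0, -1)}, by ext; simp⟩
  obtain ⟨B, hB⟩ : (vectorSpan ℝ (V : Set E))ᗮ.FG := IsNoetherian.noetherian _
  set V' := V ∪ B.image (v₀ + ·)
  have hV' : (V' : Set E) = (V : Set E) ∪ (v₀ + ·) '' B := by simp [V']
  obtain ⟨c, hc⟩ := ((convex_convexHull ℝ (V' : Set E)).interior_nonempty_iff_affineSpan_eq_top).2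
    (by rw [affineSpan_convexHull, hV']; exact affineSpan_union_image_add_eq_top hv₀ hB)
  obtain ⟨R₁, hR₁⟩ := exists_polyhedron_eq_convexHull_of_mem_interior V' hc
  obtain ⟨R₂, hR₂⟩ := exists_polyhedron_eq_setOf_sub_mem (vectorSpan ℝ (V : Set E)) v₀
  refine ⟨R₁ ∪ R₂, ?_⟩
  rw [polyhedron_union, ← hR₁, hR₂, hV']
  exact convexHull_eq_convexHull_union_image_add_inter hv₀ (hB ▸ Submodule.subset_span)

end MinkowskiWeyl

section PolytopeO

variable {n : ℕ} {P Q : Set (Eucl n)}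

lemma IsPolytopeO.isCompact (hP : IsPolytopeO P) : IsCompact P := by
  obtain ⟨⟨S, -, rfl⟩, -⟩ := hP
  exact S.finite_toSet.isCompact_convexHull ℝ

lemma IsPolytopeO.convex (hP : IsPolytopeO P) : Convex ℝ P := by
  obtain ⟨⟨S, -, rfl⟩, -⟩ := hP
  exact convex_convexHull ℝ _

lemma IsPolytopeO.exists_eq_polyhedron (hP : IsPolytopeO P) :
    ∃ R : Finset (Eucl n × ℝ), P = polyhedron R := by
  obtain ⟨⟨S, -, rfl⟩, -⟩ := hP
  exact exists_polyhedron_eq_convexHull S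

lemma isPolytopeO_polyhedron {R : Finset (Eucl n × ℝ)} (hR : IsCompact (polyhedron R))
    (h0 : 0 ∈ polyhedron R) : IsPolytopeO (polyhedron R) := by
  obtain ⟨V, hV⟩ := exists_finset_eq_convexHull_of_isCompact hR
  refine ⟨⟨V, ?_, hV⟩, h0⟩
  rw [← Finset.coe_nonempty, ← convexHull_nonempty_iff (𝕜 := ℝ), ← hV]
  exact ⟨0, h0⟩

lemma IsPolytopeO.inter_polyhedron (hP : IsPolytopeO P) {T : Finset (Eucl n × ℝ)}
    (h0 : 0 ∈ polyhedron T) : IsPolytopeO (P ∩ polyhedron T) := by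
  classical
  obtain ⟨R, rfl⟩ := hP.exists_eq_polyhedron
  rw [← polyhedron_union]
  refine isPolytopeO_polyhedron (hP.isCompact.of_isClosed_subset (isClosed_polyhedron _) ?_) ?_ <;>
    rw [polyhedron_union]
  exacts [Set.inter_subset_left, ⟨hP.2, h0⟩]

lemma IsPolytopeO.inter (hP : IsPolytopeO P) (hQ : IsPolytopeO Q) : IsPolytopeO (P ∩ Q) := by
  obtain ⟨R, rfl⟩ := hQ.exists_eq_polyhedron
  exact hP.inter_polyhedron hQ.2

lemma isPolytopeO_biInter {ι : Type*} {s : Finset ι} (hs : s.Nonempty) {P : ι → Set (Eucl n)}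
    (hP : ∀ i ∈ s, IsPolytopeO (P i)) : IsPolytopeO (⋂ i ∈ s, P i) := by
  classical
  induction hs using Finset.Nonempty.cons_induction with
  | singleton i => simpa using hP i (by simp)
  | cons i s hi hs ih =>
    rw [Finset.cons_eq_insert, Finset.set_biInter_insert]
    exact (hP i (by simp)).inter (ih fun j hj => hP j (by simp [hj]))

end PolytopeO

section InclusionExclusion

variable {α ι A : Type*} [AddCommGroup A]

def InclusionExclusion (Φ : Set α → A) (s : Finset ι) (P : ι → Set α) : Prop :=
  Φ (⋃ i ∈ s, P i) =
    ∑ S ∈ s.powerset.filter (·.Nonempty), (-1 : ℤ) ^ (S.card - 1) • Φ (⋂ i ∈ S, P i)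

lemma sum_powerset_eq_sub_sum_filter_nonempty (t : Finset ι) (G : Finset ι → A) :
    ∑ T ∈ t.powerset, (-1 : ℤ) ^ T.card • G T =
      G ∅ - ∑ T ∈ t.powerset.filter (·.Nonempty), (-1 : ℤ) ^ (T.card - 1) • G T := by
  rw [← Finset.sum_filter_not_add_sum_filter _ (·.Nonempty), sub_eq_add_neg,
    ← Finset.sum_neg_distrib]
  have hempty : t.powerset.filter (fun T => ¬ T.Nonempty) = {∅} := by
    ext T
    simp +contextual [Finset.not_nonempty_iff_eq_empty]
  rw [hempty, Finset.sum_singleton, Finset.card_empty, pow_zero, one_smul]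
  congr 1
  refine Finset.sum_congr rfl fun T hT => ?_
  obtain ⟨m, hm⟩ := Nat.exists_eq_add_one_of_ne_zero (Finset.mem_filter.1 hT).2.card_ne_zero
  rw [hm, Nat.add_sub_cancel, pow_succ, mul_neg_one, neg_smul]

lemma sum_powerset_insert_filter_nonempty [DecidableEq ι] {t : Finset ι} {k : ι} (hk : k ∉ t)
    (F : Finset ι → A) :
    ∑ S ∈ (insert k t).powerset.filter (·.Nonempty), (-1 : ℤ) ^ (S.card - 1) • F S =
      ∑ S ∈ t.powerset.filter (·.Nonempty), (-1 : ℤ) ^ (S.card - 1) • F S + (F {k} -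
        ∑ S ∈ t.powerset.filter (·.Nonempty), (-1 : ℤ) ^ (S.card - 1) • F (insert k S)) := by
  have h := sum_powerset_eq_sub_sum_filter_nonempty t fun S => F (insert k S)
  rw [Finset.insert_empty] at h
  rw [Finset.sum_filter, Finset.sum_powerset_insert hk, ← Finset.sum_filter, ← h]
  congr 1
  refine Finset.sum_congr rfl fun T hT => ?_
  have hkT : k ∉ T := fun h => hk (Finset.mem_powerset.1 hT h)
  rw [if_pos (Finset.insert_nonempty k T), Finset.card_insert_of_notMem hkT, Nat.add_sub_cancel]

variable {Φ : Set α → A} {s : Finset ι} {P Q : ι → Set α}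

lemma InclusionExclusion.congr (h : ∀ i ∈ s, P i = Q i) (hP : InclusionExclusion Φ s P) :
    InclusionExclusion Φ s Q := by
  unfold InclusionExclusion at hP ⊢
  rw [← Set.iUnion₂_congr h, hP]
  refine Finset.sum_congr rfl fun S hS => ?_
  rw [Set.iInter₂_congr fun i hi => h i (Finset.mem_powerset.1 (Finset.mem_filter.1 hS).1 hi)]

lemma inclusionExclusion_singleton (Φ : Set α → A) (k : ι) (P : ι → Set α) :
    InclusionExclusion Φ {k} P := by
  classical
  rw [InclusionExclusion, ← Finset.insert_empty,
    sum_powerset_insert_filter_nonempty (Finset.notMem_empty k)]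
  simp [Finset.filter_singleton]

lemma biUnion_erase_eq_of_subset [DecidableEq ι] {k : ι} (hk : k ∈ s)
    (hsub : P k ⊆ ⋃ l ∈ s.erase k, P l) : ⋃ l ∈ s.erase k, P l = ⋃ i ∈ s, P i := by
  conv_rhs => rw [← Finset.insert_erase hk]
  rw [Finset.set_biUnion_insert, Set.union_eq_right.2 hsub]

lemma biUnion_erase_inter_eq_of_subset [DecidableEq ι] {k : ι}
    (hsub : P k ⊆ ⋃ l ∈ s.erase k, P l) : ⋃ l ∈ s.erase k, (P k ∩ P l) = P k := by
  rw [← Set.inter_iUnion₂, Set.inter_eq_left.2 hsub]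

lemma InclusionExclusion.of_subset_biUnion_erase [DecidableEq ι] {k : ι} (hk : k ∈ s)
    (hsub : P k ⊆ ⋃ l ∈ s.erase k, P l) (hP : InclusionExclusion Φ (s.erase k) P)
    (hPk : InclusionExclusion Φ (s.erase k) fun l => P k ∩ P l) : InclusionExclusion Φ s P := by
  unfold InclusionExclusion at hP hPk ⊢
  rw [← biUnion_erase_eq_of_subset hk hsub, hP]
  conv_rhs => rw [← Finset.insert_erase hk]
  rw [sum_powerset_insert_filter_nonempty (Finset.notMem_erase k s), left_eq_add, sub_eq_zero,
    Finset.set_biInter_singleton, ← biUnion_erase_inter_eq_of_subset hsub, hPk]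
  refine Finset.sum_congr rfl fun S hS => ?_
  have hinter := Set.inter_biInter (Finset.coe_nonempty.2 (Finset.mem_filter.1 hS).2) P (P k)
  simp only [Finset.mem_coe] at hinter
  rw [Finset.set_biInter_insert, ← hinter]

end InclusionExclusion

section Redundancy

variable {E ι : Type*} [NormedAddCommGroup E] [InnerProductSpace ℝ E]

def IsSignConstOn (w : E) (U : Set E) : Prop :=
  (∀ x ∈ U, 0 ≤ ⟪w, x⟫) ∨ ∀ x ∈ U, ⟪w, x⟫ ≤ 0

lemma IsSignConstOn.mono {w : E} {U V : Set E} (h : IsSignConstOn w U) (hVU : V ⊆ U) :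
    IsSignConstOn w V :=
  h.imp (fun h x hx => h x (hVU hx)) fun h x hx => h x (hVU hx)

lemma IsSignConstOn.smul {w : E} {U : Set E} (h : IsSignConstOn w U) (c : ℝ) :
    IsSignConstOn (c • w) U := by
  simp only [IsSignConstOn, real_inner_smul_left]
  rcases le_total 0 c with hc | hc <;> rcases h with h | h
  · exact .inl fun x hx => mul_nonneg hc (h x hx)
  · exact .inr fun x hx => mul_nonpos_of_nonneg_of_nonpos hc (h x hx)
  · exact .inr fun x hx => mul_nonpos_of_nonpos_of_nonneg hc (h x hx)
  · exact .inl fun x hx => mul_nonneg_of_nonpos_of_nonpos hc (h x hx)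

/- The normals `p.1` of the constraints in `C`, and for `p, q ∈ C` the normal
`q.2 • p.1 - p.2 • q.1` of the hyperplane through `0` and `{⟪p.1, x⟫ = p.2} ∩ {⟪q.1, x⟫ = q.2}`. -/
open Classical in
def cutDirections (C : Finset (E × ℝ)) : Finset E :=
  C.image Prod.fst ∪ (C ×ˢ C).image fun pq => pq.2.2 • pq.1.1 - pq.1.2 • pq.2.1

lemma fst_mem_cutDirections {C : Finset (E × ℝ)} {p : E × ℝ} (hp : p ∈ C) :
    p.1 ∈ cutDirections C := by
  classical
  simp only [cutDirections]
  exact Finset.mem_union_left _ (Finset.mem_image_of_mem _ hp)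

lemma smul_sub_smul_mem_cutDirections {C : Finset (E × ℝ)} {p q : E × ℝ} (hp : p ∈ C)
    (hq : q ∈ C) : q.2 • p.1 - p.2 • q.1 ∈ cutDirections C := by
  classical
  simp only [cutDirections]
  exact Finset.mem_union_right _ (Finset.mem_image.2 ⟨(p, q), Finset.mem_product.2 ⟨hp, hq⟩, rfl⟩)

lemma mem_cutDirections_union [DecidableEq (E × ℝ)] {C T : Finset (E × ℝ)} {v w : E}
    (hT : ∀ p ∈ T, p.2 = 0 ∧ ∃ c : ℝ, p.1 = c • v) (hw : w ∈ cutDirections (C ∪ T)) :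
    w ∈ cutDirections C ∨ ∃ c : ℝ, w = c • v := by
  classical
  simp only [cutDirections, Finset.mem_union, Finset.mem_image, Finset.mem_product] at hw
  rcases hw with ⟨p, hp | hp, rfl⟩ | ⟨⟨p, q⟩, ⟨hp | hp, hq | hq⟩, rfl⟩
  · exact .inl (fst_mem_cutDirections hp)
  · obtain ⟨-, c, hc⟩ := hT p hp
    exact .inr ⟨c, hc⟩
  · exact .inl (smul_sub_smul_mem_cutDirections hp hq)
  · obtain ⟨hq0, c, hc⟩ := hT q hq
    exact .inr ⟨-(p.2 * c), by simp [hq0, hc, smul_smul]⟩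
  · obtain ⟨hp0, c, hc⟩ := hT p hp
    exact .inr ⟨q.2 * c, by simp [hp0, hc, smul_smul]⟩
  · exact .inr ⟨0, by simp [(hT p hp).1, (hT q hq).1]⟩

/- Points near `z` on the segment towards `y` lie in the union but strictly on the positive side
of `a`, hence outside `P k`; as the other pieces form a closed set, `z` lies in it too. -/
lemma subset_biUnion_erase_of_inner_nonpos [DecidableEq ι] {s : Finset ι} {P : ι → Set E}
    (hP : ∀ i ∈ s, IsClosed (P i)) (hU : Convex ℝ (⋃ i ∈ s, P i)) {k : ι} (hk : k ∈ s) {a y : E}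
    (hPk : ∀ x ∈ P k, ⟪a, x⟫ ≤ 0) (hUa : ∀ x ∈ ⋃ i ∈ s, P i, 0 ≤ ⟪a, x⟫)
    (hy : y ∈ ⋃ i ∈ s, P i) (hay : 0 < ⟪a, y⟫) : P k ⊆ ⋃ l ∈ s.erase k, P l := by
  intro z hz
  have hzU : z ∈ ⋃ i ∈ s, P i := Set.mem_biUnion hk hz
  have hza : ⟪a, z⟫ = 0 := le_antisymm (hPk z hz) (hUa z hzU)
  have hclosed : IsClosed (⋃ l ∈ s.erase k, P l) :=
    (s.erase k).finite_toSet.isClosed_biUnion fun l hl => hP l (Finset.mem_of_mem_erase hl)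
  refine hclosed.closure_subset_iff.2 ?_
    (segment_subset_closure_openSegment (left_mem_segment ℝ z y))
  rintro _ ⟨α, β, hα, hβ, hαβ, rfl⟩
  obtain ⟨l, hl, hxl⟩ := Set.mem_iUnion₂.1 (hU hzU hy hα.le hβ.le hαβ)
  refine Set.mem_biUnion (Finset.mem_erase.2 ⟨?_, hl⟩) hxl
  rintro rfl
  have := hPk _ hxl
  rw [inner_add_right, real_inner_smul_right, real_inner_smul_right, hza] at this
  nlinarith

lemma subset_biUnion_erase_or_exists_pos_lt_inner [DecidableEq ι] {s : Finset ι}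
    {R : ι → Finset (E × ℝ)} (h0 : ∀ i ∈ s, 0 ∈ polyhedron (R i))
    (hU : Convex ℝ (⋃ i ∈ s, polyhedron (R i))) {k : ι} (hk : k ∈ s)
    (hsign : ∀ p ∈ R k, IsSignConstOn p.1 (⋃ i ∈ s, polyhedron (R i))) {y : E}
    (hyU : y ∈ ⋃ i ∈ s, polyhedron (R i)) (hyk : y ∉ polyhedron (R k)) :
    polyhedron (R k) ⊆ ⋃ l ∈ s.erase k, polyhedron (R l) ∨
      ∃ p ∈ R k, 0 < p.2 ∧ p.2 < ⟪p.1, y⟫ := by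
  obtain ⟨p, hp, hpy⟩ : ∃ p ∈ R k, p.2 < ⟪p.1, y⟫ := by simpa using hyk
  rcases (zero_mem_polyhedron_iff.1 (h0 k hk) p hp).lt_or_eq with hpos | hzero
  · exact .inr ⟨p, hp, hpos, hpy⟩
  rw [← hzero] at hpy
  refine .inl (subset_biUnion_erase_of_inner_nonpos (fun i _ => isClosed_polyhedron _) hU hk
    (fun x hx => hzero ▸ hx p hp) ?_ hyU hpy)
  exact (hsign p hp).resolve_right fun h => (h y hyU).not_gt hpy

/- If `P i` and `P j` are not nested, pick `y ∈ P j \ P i` and `x ∈ P i \ P j`. Unless one of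
them is redundant, there are constraints `p` of `P i` and `q` of `P j` with positive right-hand
sides violated at `y` and at `x` respectively, and then `q.2 • p.1 - p.2 • q.1` is negative at `x`
but positive at `y`. -/
theorem exists_subset_biUnion_erase [DecidableEq ι] {s : Finset ι} {C : Finset (E × ℝ)}
    {R : ι → Finset (E × ℝ)} (hRC : ∀ i ∈ s, R i ⊆ C) (h0 : ∀ i ∈ s, 0 ∈ polyhedron (R i))
    (hU : Convex ℝ (⋃ i ∈ s, polyhedron (R i)))
    (hsign : ∀ w ∈ cutDirections C, IsSignConstOn w (⋃ i ∈ s, polyhedron (R i)))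
    {i j : ι} (hi : i ∈ s) (hj : j ∈ s) (hij : i ≠ j) :
    ∃ k ∈ s, polyhedron (R k) ⊆ ⋃ l ∈ s.erase k, polyhedron (R l) := by
  by_cases hji : polyhedron (R j) ⊆ polyhedron (R i)
  · exact ⟨j, hj, fun x hx => Set.mem_biUnion (Finset.mem_erase.2 ⟨hij, hi⟩) (hji hx)⟩
  by_cases hij' : polyhedron (R i) ⊆ polyhedron (R j)
  · exact ⟨i, hi, fun x hx => Set.mem_biUnion (Finset.mem_erase.2 ⟨hij.symm, hj⟩) (hij' hx)⟩
  obtain ⟨y, hyj, hyi⟩ := Set.not_subset.1 hji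
  obtain ⟨x, hxi, hxj⟩ := Set.not_subset.1 hij'
  have hxU : x ∈ ⋃ l ∈ s, polyhedron (R l) := Set.mem_biUnion hi hxi
  have hyU : y ∈ ⋃ l ∈ s, polyhedron (R l) := Set.mem_biUnion hj hyj
  have hsign' (k) (hk : k ∈ s) : ∀ p ∈ R k, IsSignConstOn p.1 (⋃ l ∈ s, polyhedron (R l)) :=
    fun p hp => hsign _ (fst_mem_cutDirections (hRC k hk hp))
  obtain hred | ⟨p, hp, hp0, hpy⟩ :=
    subset_biUnion_erase_or_exists_pos_lt_inner h0 hU hi (hsign' i hi) hyU hyi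
  · exact ⟨i, hi, hred⟩
  obtain hred | ⟨q, hq, hq0, hqx⟩ :=
    subset_biUnion_erase_or_exists_pos_lt_inner h0 hU hj (hsign' j hj) hxU hxj
  · exact ⟨j, hj, hred⟩
  have hpx := hxi p hp
  have hqy := hyj q hq
  have hx : ⟪q.2 • p.1 - p.2 • q.1, x⟫ < 0 := by
    rw [inner_sub_left, real_inner_smul_left, real_inner_smul_left]
    nlinarith
  have hy : 0 < ⟪q.2 • p.1 - p.2 • q.1, y⟫ := by
    rw [inner_sub_left, real_inner_smul_left, real_inner_smul_left]
    nlinarith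
  rcases hsign _ (smul_sub_smul_mem_cutDirections (hRC i hi hp) (hRC j hj hq)) with h | h
  · exact absurd (h x hxU) hx.not_ge
  · exact absurd (h y hyU) hy.not_ge

end Redundancy

section Valuation

variable {n : ℕ} {ι A : Type*} [AddCommGroup A]

def IsPolytopeOValuation (Φ : Set (Eucl n) → A) : Prop :=
  ∀ K L : Set (Eucl n), IsPolytopeO K → IsPolytopeO L → IsPolytopeO (K ∪ L) →
    Φ (K ∪ L) + Φ (K ∩ L) = Φ K + Φ L

def HasInclusionExclusion (Φ : Set (Eucl n) → A) (s : Finset ι) : Prop :=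
  ∀ P : ι → Set (Eucl n), (∀ i ∈ s, IsPolytopeO (P i)) → IsPolytopeO (⋃ i ∈ s, P i) →
    InclusionExclusion Φ s P

variable {Φ : Set (Eucl n) → A}

lemma IsPolytopeOValuation.eq_add_sub_of_cut [DecidableEq (Eucl n × ℝ)]
    (hΦ : IsPolytopeOValuation Φ) {X : Set (Eucl n)} (hX : IsPolytopeO X) (v : Eucl n) :
    Φ X = Φ (X ∩ polyhedron {(-v, 0)}) + Φ (X ∩ polyhedron {(v, 0)}) -
      Φ (X ∩ polyhedron ({(-v, 0)} ∪ {(v, 0)})) := by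
  have hcover : X ∩ polyhedron {(-v, 0)} ∪ X ∩ polyhedron {(v, 0)} = X := by
    rw [← Set.inter_union_distrib_left, Set.inter_eq_left]
    intro x _
    rcases le_total ⟪v, x⟫ 0 with h | h
    · exact .inr (by simpa using h)
    · exact .inl (by simpa using h)
  have h := hΦ _ _ (hX.inter_polyhedron (by simp)) (hX.inter_polyhedron (by simp))
    (hcover ▸ hX)
  rw [hcover, ← Set.inter_inter_distrib_left, ← polyhedron_union] at h
  exact eq_sub_of_add_eq h

lemma IsPolytopeOValuation.inclusionExclusion_of_cut (hΦ : IsPolytopeOValuation Φ)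
    {s : Finset ι} {P : ι → Set (Eucl n)} (hP : ∀ i ∈ s, IsPolytopeO (P i))
    (hU : IsPolytopeO (⋃ i ∈ s, P i)) (v : Eucl n)
    (hcut : ∀ T : Finset (Eucl n × ℝ), (∀ p ∈ T, p.2 = 0 ∧ ∃ c : ℝ, p.1 = c • v) →
      IsSignConstOn v (polyhedron T) → InclusionExclusion Φ s fun i => P i ∩ polyhedron T) :
    InclusionExclusion Φ s P := by
  classical
  have hneg : ∃ c : ℝ, -v = c • v := ⟨-1, (neg_one_smul ℝ v).symm⟩
  have hpos : ∃ c : ℝ, v = c • v := ⟨1, (one_smul ℝ v).symm⟩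
  have hge := hcut {(-v, 0)} (by simpa using hneg) (.inl fun x hx => by simpa using hx)
  have hle := hcut {(v, 0)} (by simpa using hpos) (.inr fun x hx => by simpa using hx)
  have heq := hcut ({(-v, 0)} ∪ {(v, 0)}) (by simpa using ⟨hneg, hpos⟩)
    (.inr fun x hx => by simpa using (Set.ext_iff.1 (polyhedron_union _ _) x).1 hx |>.2)
  unfold InclusionExclusion at hge hle heq ⊢
  rw [← Set.iUnion₂_inter] at hge hle heq
  rw [hΦ.eq_add_sub_of_cut hU v, hge, hle, heq, ← Finset.sum_add_distrib, ← Finset.sum_sub_distrib]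
  refine Finset.sum_congr rfl fun S hS => ?_
  obtain ⟨hSs, hSne⟩ := Finset.mem_filter.1 hS
  have hinter (H : Set (Eucl n)) : ⋂ i ∈ S, (P i ∩ H) = (⋂ i ∈ S, P i) ∩ H := by
    simpa using Set.biInter_inter (Finset.coe_nonempty.2 hSne) P H
  rw [hinter, hinter, hinter, hΦ.eq_add_sub_of_cut (isPolytopeO_biInter hSne fun i hi =>
    hP i (Finset.mem_powerset.1 hSs hi)) v, smul_sub, smul_add]

lemma inclusionExclusion_of_isSignConstOn [DecidableEq ι]
    {s : Finset ι} (hs : 1 < s.card) (IH : ∀ k ∈ s, HasInclusionExclusion Φ (s.erase k))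
    {C : Finset (Eucl n × ℝ)} {R : ι → Finset (Eucl n × ℝ)} (hRC : ∀ i ∈ s, R i ⊆ C)
    (hR : ∀ i ∈ s, IsPolytopeO (polyhedron (R i))) (hU : IsPolytopeO (⋃ i ∈ s, polyhedron (R i)))
    (hsign : ∀ w ∈ cutDirections C, IsSignConstOn w (⋃ i ∈ s, polyhedron (R i))) :
    InclusionExclusion Φ s fun i => polyhedron (R i) := by
  obtain ⟨i, hi, j, hj, hij⟩ := Finset.one_lt_card.1 hs
  obtain ⟨k, hk, hsub⟩ :=
    exists_subset_biUnion_erase hRC (fun i hi => (hR i hi).2) hU.convex hsign hi hj hij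
  have hrest : InclusionExclusion Φ (s.erase k) fun i => polyhedron (R i) :=
    IH k hk _ (fun l hl => hR l (Finset.mem_of_mem_erase hl))
      (by rwa [biUnion_erase_eq_of_subset hk hsub])
  have hmeet : InclusionExclusion Φ (s.erase k) fun l => polyhedron (R k) ∩ polyhedron (R l) :=
    IH k hk _ (fun l hl => (hR k hk).inter (hR l (Finset.mem_of_mem_erase hl)))
      (by rw [biUnion_erase_inter_eq_of_subset (P := fun i => polyhedron (R i)) hsub]
          exact hR k hk)
  exact .of_subset_biUnion_erase hk hsub hrest hmeet

theorem IsPolytopeOValuation.inclusionExclusion_of_cutDirections [DecidableEq ι]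
    (hΦ : IsPolytopeOValuation Φ) {s : Finset ι} (hs : 1 < s.card)
    (IH : ∀ k ∈ s, HasInclusionExclusion Φ (s.erase k)) (L : List (Eucl n)) :
    ∀ (C : Finset (Eucl n × ℝ)) (R : ι → Finset (Eucl n × ℝ)), (∀ i ∈ s, R i ⊆ C) →
      (∀ i ∈ s, IsPolytopeO (polyhedron (R i))) → IsPolytopeO (⋃ i ∈ s, polyhedron (R i)) →
      (∀ w ∈ cutDirections C,
        IsSignConstOn w (⋃ i ∈ s, polyhedron (R i)) ∨ ∃ v ∈ L, ∃ c : ℝ, w = c • v) →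
      InclusionExclusion Φ s fun i => polyhedron (R i) := by
  induction L with
  | nil =>
    intro C R hRC hR hU hdir
    exact inclusionExclusion_of_isSignConstOn hs IH hRC hR hU fun w hw =>
      (hdir w hw).resolve_right (by simp)
  | cons v L ih =>
    intro C R hRC hR hU hdir
    refine hΦ.inclusionExclusion_of_cut hR hU v fun T hT hTv => ?_
    classical
    have h0T : 0 ∈ polyhedron T := zero_mem_polyhedron_iff.2 fun p hp => (hT p hp).1.ge
    have hUT : ⋃ i ∈ s, polyhedron (R i ∪ T) = (⋃ i ∈ s, polyhedron (R i)) ∩ polyhedron T := by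
      simp only [polyhedron_union, Set.iUnion₂_inter]
    have hRT : (fun i => polyhedron (R i) ∩ polyhedron T) = fun i => polyhedron (R i ∪ T) :=
      funext fun i => (polyhedron_union _ _).symm
    rw [hRT]
    refine ih (C ∪ T) (fun i => R i ∪ T) (fun i hi => Finset.union_subset_union (hRC i hi) le_rfl)
      (fun i hi => by rw [polyhedron_union]; exact (hR i hi).inter_polyhedron h0T)
      (hUT ▸ hU.inter_polyhedron h0T) fun w hw => ?_
    rw [hUT]
    rcases mem_cutDirections_union hT hw with hw | ⟨c, rfl⟩
    · rcases hdir w hw with h | ⟨u, hu, c, rfl⟩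
      · exact .inl (h.mono Set.inter_subset_left)
      rcases List.mem_cons.1 hu with rfl | hu
      · exact .inl ((hTv.smul c).mono Set.inter_subset_right)
      · exact .inr ⟨u, hu, c, rfl⟩
    · exact .inl ((hTv.smul c).mono Set.inter_subset_right)

theorem IsPolytopeOValuation.hasInclusionExclusion [DecidableEq ι] (hΦ : IsPolytopeOValuation Φ)
    (s : Finset ι) : HasInclusionExclusion Φ s := by
  induction s using Finset.strongInduction with
  | H s IH =>
  intro P hP hU
  rcases s.eq_empty_or_nonempty with rfl | hne
  · simpa using hU.2
  rcases (Nat.one_le_iff_ne_zero.2 hne.card_ne_zero).eq_or_lt with hs | hs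
  · obtain ⟨k, rfl⟩ := Finset.card_eq_one.1 hs.symm
    exact inclusionExclusion_singleton Φ k P
  choose! R hR using fun i hi => (hP i hi).exists_eq_polyhedron
  have hRP : InclusionExclusion Φ s fun i => polyhedron (R i) :=
    hΦ.inclusionExclusion_of_cutDirections hs (fun k hk => IH _ (Finset.erase_ssubset hk))
      (cutDirections (s.biUnion R)).toList (s.biUnion R) R
      (fun i hi => Finset.subset_biUnion_of_mem R hi) (fun i hi => hR i hi ▸ hP i hi)
      (Set.iUnion₂_congr hR ▸ hU)
      fun w hw => .inr ⟨w, Finset.mem_toList.2 hw, 1, (one_smul ℝ w).symm⟩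
  exact hRP.congr fun i hi => (hR i hi).symm

end Valuation

theorem statement_4_general (n : ℕ) {A : Type*} [AddCommGroup A]
    (Φ : Set (Eucl n) → A)
    (hval : ∀ K L : Set (Eucl n), IsPolytopeO K → IsPolytopeO L → IsPolytopeO (K ∪ L) →
      Φ (K ∪ L) + Φ (K ∩ L) = Φ K + Φ L)
    (m : ℕ) (P : Fin m → Set (Eucl n)) (hP : ∀ i, IsPolytopeO (P i))
    (hU : IsPolytopeO (⋃ i, P i)) :
    Φ (⋃ i, P i) =
      ∑ S ∈ Finset.univ.powerset.filter (fun S : Finset (Fin m) => S.Nonempty),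
        (-1 : ℤ) ^ (S.card - 1) • Φ (⋂ i ∈ S, P i) := by
  have h := IsPolytopeOValuation.hasInclusionExclusion hval Finset.univ P (fun i _ => hP i)
    (by simpa using hU)
  simpa only [InclusionExclusion, Finset.mem_univ, Set.iUnion_true] using h

/-- A valuation on convex polytopes containing the origin with values in
an abelian group (with the convention `Φ ∅ = 0`) satisfies the inclusion-exclusion
principle. -/
theorem statement_4 (n : ℕ) {A : Type*} [AddCommGroup A]
    (Φ : Set (Eucl n) → A) (hempty : Φ ∅ = 0)
    (hval : ∀ K L : Set (Eucl n), IsPolytopeO K → IsPolytopeO L → IsPolytopeO (K ∪ L) →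
      Φ (K ∪ L) + Φ (K ∩ L) = Φ K + Φ L)
    (m : ℕ) (P : Fin m → Set (Eucl n)) (hP : ∀ i, IsPolytopeO (P i))
    (hU : IsPolytopeO (⋃ i, P i)) :
    Φ (⋃ i, P i) =
      ∑ S ∈ Finset.univ.powerset.filter (fun S : Finset (Fin m) => S.Nonempty),
        (-1 : ℤ) ^ (S.card - 1) • Φ (⋂ i ∈ S, P i) :=
  statement_4_general n Φ hval m P hP hU
end
end

section
/- Let p > 1. If c₁, c₂ ∈ R are such that the map P ↦ c₁·(h(I_p⁺P,·)^p − h(E_p⁺P,·)^p) + c₂·(h(I_p⁻P,·)^p − h(E_p⁻P,·)^p) from P²_o to C_p(R²) is continuous at the line segment [o, e₁], then c₁ = c₂ = 0. In other words, the only linear combination of P ↦ h(I_p⁺P,·)^p − h(E_p⁺P,·)^p and P ↦ h(I_p⁻P,·)^p − h(E_p⁻P,·)^p that is continuous at [o, e₁] is the trivial one. -/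
open MeasureTheory Metric
open scoped RealInnerProductSpace Pointwise

noncomputable section

/-!
On the segment `S = [o, e₁]` the only unit normals with `h(S, ·) = 0` are `±e₂`, and both faces
are `S` itself, so `E_p^± S = I_p^± S` and the combination vanishes at `S`. The kites
`conv{e₁, -δe₁, ±δe₂}` are polytopes `δ`-close to `S` with `o` in their interior, so `E_p^±`
vanishes on them; there the combination takes the value `c₁ + c₂ δ^p` at `e₁` and `c₁ δ^p + c₂`
at `-e₁`. Continuity at `S` forces both values to tend to `0` as `δ → 0⁺`, while they tend to
`c₁` and `c₂`.
-/

open Filter Topology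

section General

variable {n : ℕ}

lemma ImpF_eq_IppF_neg (p : ℝ) (K : Set (Eucl n)) (u : Eucl n) :
    ImpF p K u = IppF p K (-u) := by
  simp only [ImpF, IppF, inner_neg_right]

lemma EmpF_eq_EppF_neg (p : ℝ) (K : Set (Eucl n)) (u : Eucl n) :
    EmpF p K u = EppF p K (-u) := by
  simp only [EmpF, EppF, inner_neg_right]

lemma monotone_posPart_rpow {p : ℝ} (hp : 0 ≤ p) : Monotone fun t : ℝ => max t 0 ^ p :=
  fun _ _ hst => Real.rpow_le_rpow (le_max_right _ _) (max_le_max_right 0 hst) hp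

lemma sSup_posPart_rpow_image_eq {p : ℝ} (hp : 0 ≤ p) {K : Set (Eucl n)} {u : Eucl n} {M : ℝ}
    (hM : IsGreatest ((fun x => ⟪x, u⟫) '' K) M) :
    sSup ((fun x => max ⟪x, u⟫ 0 ^ p) '' K) = max M 0 ^ p := by
  have := (monotone_posPart_rpow hp).map_isGreatest hM
  rw [Set.image_image] at this
  exact this.csSup_eq

lemma IppF_nonneg (p : ℝ) (K : Set (Eucl n)) (u : Eucl n) : 0 ≤ IppF p K u :=
  Real.sSup_nonneg <| by
    rintro _ ⟨x, -, rfl⟩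
    exact Real.rpow_nonneg (le_max_right _ _) p

lemma IppF_le_one {p : ℝ} (hp : 0 ≤ p) {K : Set (Eucl n)} (hK : K ⊆ closedBall 0 1)
    {u : Eucl n} (hu : ‖u‖ = 1) : IppF p K u ≤ 1 := by
  refine Real.sSup_le ?_ zero_le_one
  rintro _ ⟨x, hx, rfl⟩
  have hx1 : ‖x‖ ≤ 1 := mem_closedBall_zero_iff.1 (hK hx)
  have : ⟪x, u⟫ ≤ 1 := (real_inner_le_norm x u).trans (by rw [hu, mul_one]; exact hx1)
  exact Real.rpow_le_one (le_max_right _ _) (max_le this zero_le_one) hp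

lemma EppF_eq_zero_of_suppFn_ne_zero (p : ℝ) {K : Set (Eucl n)}
    (hK : ∀ v : Eucl n, ‖v‖ = 1 → suppFn K v ≠ 0) (u : Eucl n) : EppF p K u = 0 := by
  have : IsEmpty {v : Eucl n // ‖v‖ = 1 ∧ suppFn K v = 0} := ⟨fun v => hK v.1 v.2.1 v.2.2⟩
  rw [EppF, tsum_empty, mul_zero]

lemma le_suppFn {K : Set (Eucl n)} (hK : IsCompact K) {x : Eucl n} (hx : x ∈ K) (v : Eucl n) :
    ⟪x, v⟫ ≤ suppFn K v :=
  le_csSup ((hK.image (continuous_id.inner continuous_const)).bddAbove) ⟨x, hx, rfl⟩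

lemma IppF_convexHull_eq {p : ℝ} (hp : 0 ≤ p) {V : Set (Eucl n)} {x₀ u : Eucl n}
    (hx₀ : x₀ ∈ V) (hV : ∀ y ∈ V, ⟪y, u⟫ ≤ ⟪x₀, u⟫) :
    IppF p (convexHull ℝ V) u = max ⟪x₀, u⟫ 0 ^ p := by
  refine sSup_posPart_rpow_image_eq hp ⟨⟨x₀, subset_convexHull ℝ V hx₀, rfl⟩, ?_⟩
  rintro _ ⟨x, hx, rfl⟩
  refine convexHull_min (t := {x | ⟪x, u⟫ ≤ ⟪x₀, u⟫}) hV (convex_halfSpace_le ?_ _) hx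
  exact ⟨fun a b => inner_add_left a b u, fun c a => real_inner_smul_left a u c⟩

lemma image_inner_segment_zero (y u : Eucl n) :
    (fun x => ⟪x, u⟫) '' segment ℝ 0 y = Set.uIcc 0 ⟪y, u⟫ := by
  have h := image_segment ℝ (innerₗ (Eucl n) u).toAffineMap 0 y
  have hf : ⇑(innerₗ (Eucl n) u).toAffineMap = fun x => ⟪x, u⟫ :=
    funext fun x => real_inner_comm x u
  simpa only [hf, inner_zero_left, segment_eq_uIcc] using h

lemma isGreatest_image_inner_segment_zero (y u : Eucl n) :
    IsGreatest ((fun x => ⟪x, u⟫) '' segment ℝ 0 y) (max ⟪y, u⟫ 0) := by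
  rw [image_inner_segment_zero, max_comm]
  exact isGreatest_Icc inf_le_sup

lemma suppFn_segment_zero (y v : Eucl n) : suppFn (segment ℝ 0 y) v = max ⟪y, v⟫ 0 :=
  (isGreatest_image_inner_segment_zero y v).csSup_eq

lemma face_segment_zero_of_inner_eq_zero {y v : Eucl n} (h : ⟪y, v⟫ = 0) :
    face (segment ℝ 0 y) v = segment ℝ 0 y := by
  refine Set.sep_eq_self_iff_mem_true.2 fun x hx => ?_
  have hx' : ⟪x, v⟫ ∈ Set.uIcc 0 ⟪y, v⟫ := image_inner_segment_zero y v ▸ ⟨x, hx, rfl⟩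
  rw [h, Set.uIcc_self, Set.mem_singleton_iff] at hx'
  rw [suppFn_segment_zero, h, max_self, hx']

lemma face_segment_zero_of_inner_neg {y v : Eucl n} (h : ⟪y, v⟫ < 0) :
    face (segment ℝ 0 y) v = {0} := by
  ext x
  simp only [face, suppFn_segment_zero, max_eq_right h.le, Set.mem_sep_iff,
    Set.mem_singleton_iff]
  constructor
  · rintro ⟨⟨a, b, -, -, -, rfl⟩, hb⟩
    rw [smul_zero, zero_add, real_inner_smul_left] at hb
    rw [(mul_eq_zero.1 hb).resolve_right h.ne, zero_smul, smul_zero, zero_add]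
  · rintro rfl
    exact ⟨left_mem_segment ℝ 0 y, inner_zero_left v⟩

lemma IppF_segment_zero {p : ℝ} (hp : 0 ≤ p) (y u : Eucl n) :
    IppF p (segment ℝ 0 y) u = max ⟪y, u⟫ 0 ^ p := by
  rw [IppF, sSup_posPart_rpow_image_eq hp (isGreatest_image_inner_segment_zero y u),
    max_eq_left (le_max_right _ _)]

@[simp]
lemma inner_single_one_left (i : Fin n) (v : Eucl n) :
    ⟪EuclideanSpace.single i (1 : ℝ), v⟫ = v i := by
  simp [EuclideanSpace.inner_single_left]

@[simp]
lemma inner_smul_single_one_left (a : ℝ) (i : Fin n) (v : Eucl n) :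
    ⟪a • EuclideanSpace.single i (1 : ℝ), v⟫ = a * v i := by
  rw [real_inner_smul_left, inner_single_one_left]

end General

local notation "e₁" => EuclideanSpace.single (0 : Fin 2) (1:ℝ)
local notation "e₂" => EuclideanSpace.single (1 : Fin 2) (1:ℝ)

lemma eq_e₂_or_eq_neg_e₂ {v : Eucl 2} (hv : ‖v‖ = 1) (h : v 0 = 0) : v = e₂ ∨ v = -e₂ := by
  have hsq : v 1 ^ 2 = 1 := by
    have := EuclideanSpace.real_norm_sq_eq v
    rw [hv, Fin.sum_univ_two, h] at this
    linarith
  rcases sq_eq_one_iff.1 hsq with h1 | h1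
  · left; ext i; fin_cases i <;> simp [h, h1]
  · right; ext i; fin_cases i <;> simp [h, h1]

lemma EppF_segment_e₁ {p : ℝ} (hp : 0 < p) (u : Eucl 2) :
    EppF p (segment ℝ 0 e₁) u = max ⟪e₁, u⟫ 0 ^ p := by
  set T := {v : Eucl 2 // ‖v‖ = 1 ∧ suppFn (segment ℝ 0 e₁) v = 0}
  have hmem : ∀ v : Eucl 2, ‖v‖ = 1 → v 0 = 0 → ‖v‖ = 1 ∧ suppFn (segment ℝ 0 e₁) v = 0 :=
    fun v hv h => ⟨hv, by simp [suppFn_segment_zero, h]⟩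
  let a : T := ⟨e₂, hmem _ (by simp) (by simp)⟩
  let b : T := ⟨-e₂, hmem _ (by simp) (by simp)⟩
  have hab : a ≠ b := by
    intro h
    have := congrArg (fun w : T => w.1 1) h
    norm_num [a, b] at this
  have hface : ∀ v : Eucl 2, v 0 = 0 →
      sSup ((fun x => max ⟪x, u⟫ 0 ^ p) '' face (segment ℝ 0 e₁) v) = max ⟪e₁, u⟫ 0 ^ p := by
    intro v h
    rw [face_segment_zero_of_inner_eq_zero (by simpa using h)]
    exact IppF_segment_zero hp.le e₁ u
  have hzero : ∀ v ∉ ({a, b} : Finset T),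
      sSup ((fun x => max ⟪x, u⟫ 0 ^ p) '' face (segment ℝ 0 e₁) v.1) = 0 := by
    rintro ⟨v, hv, hsupp⟩ hvab
    have hle : ⟪e₁, v⟫ ≤ 0 := by rw [suppFn_segment_zero] at hsupp; exact max_eq_right_iff.1 hsupp
    have hlt : ⟪e₁, v⟫ < 0 := by
      refine hle.lt_of_ne fun h0 => hvab ?_
      rcases eq_e₂_or_eq_neg_e₂ hv (by simpa using h0) with rfl | rfl <;> simp [a, b]
    rw [face_segment_zero_of_inner_neg hlt, Set.image_singleton, csSup_singleton,
      inner_zero_left, max_self, Real.zero_rpow hp.ne']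
  rw [EppF, tsum_eq_sum hzero, Finset.sum_pair hab, hface a (by simp [a]), hface b (by simp [b])]
  ring

def kite (δ : ℝ) : Set (Eucl 2) := convexHull ℝ {e₁, (-δ) • e₁, δ • e₂, (-δ) • e₂}

lemma zero_mem_kite (δ : ℝ) : (0 : Eucl 2) ∈ kite δ := by
  have h : (1 / 2 : ℝ) • (δ • e₂) + (1 / 2 : ℝ) • ((-δ) • e₂) = (0 : Eucl 2) := by module
  exact h ▸ convex_convexHull ℝ _ (subset_convexHull ℝ _ (by simp))
    (subset_convexHull ℝ _ (by simp)) (by norm_num) (by norm_num) (by norm_num)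

lemma isPolytopeO_kite (δ : ℝ) : IsPolytopeO (kite δ) :=
  ⟨⟨{e₁, (-δ) • e₁, δ • e₂, (-δ) • e₂}, by simp,
    by simp only [kite, Finset.coe_insert, Finset.coe_singleton]⟩, zero_mem_kite δ⟩

lemma segment_subset_kite (δ : ℝ) : segment ℝ 0 e₁ ⊆ kite δ :=
  (convex_convexHull ℝ _).segment_subset (zero_mem_kite δ) (subset_convexHull ℝ _ (by simp))

lemma kite_subset_segment_add_closedBall {δ : ℝ} (hδ : 0 ≤ δ) :
    kite δ ⊆ segment ℝ 0 e₁ + closedBall 0 δ := by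
  refine convexHull_min ?_ ((convex_segment 0 e₁).add (convex_closedBall 0 δ))
  have hball : ∀ i : Fin 2, ∀ a : ℝ, |a| = δ → a • EuclideanSpace.single i (1 : ℝ) ∈
      segment ℝ 0 e₁ + closedBall 0 δ := fun i a ha =>
    ⟨0, left_mem_segment ℝ 0 e₁, _, by simp [norm_smul, ha], zero_add _⟩
  rintro x (rfl | rfl | rfl | rfl)
  · exact ⟨e₁, right_mem_segment ℝ 0 e₁, 0, by simpa using hδ, add_zero _⟩
  · exact hball 0 _ (by simp [abs_of_nonneg hδ])
  · exact hball 1 _ (abs_of_nonneg hδ)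
  · exact hball 1 _ (by simp [abs_of_nonneg hδ])

lemma hausdorffDist_kite_segment_le {δ : ℝ} (hδ : 0 ≤ δ) :
    hausdorffDist (kite δ) (segment ℝ 0 e₁) ≤ δ := by
  refine hausdorffDist_le_of_mem_dist hδ (fun x hx => ?_)
    fun x hx => ⟨x, segment_subset_kite δ hx, by simpa using hδ⟩
  obtain ⟨y, hy, z, hz, rfl⟩ := kite_subset_segment_add_closedBall hδ hx
  exact ⟨y, hy, by simpa using hz⟩

lemma kite_subset_closedBall {δ : ℝ} (hδ₀ : 0 ≤ δ) (hδ₁ : δ ≤ 1) :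
    kite δ ⊆ closedBall 0 1 := by
  refine convexHull_min ?_ (convex_closedBall 0 1)
  rintro x (rfl | rfl | rfl | rfl) <;> simp [norm_smul, abs_of_nonneg hδ₀, hδ₁]

lemma isCompact_kite (δ : ℝ) : IsCompact (kite δ) :=
  (Set.toFinite {e₁, (-δ) • e₁, δ • e₂, (-δ) • e₂}).isCompact_convexHull (𝕜 := ℝ)

lemma suppFn_kite_ne_zero {δ : ℝ} (hδ : 0 < δ) {v : Eucl 2} (hv : v ≠ 0) :
    suppFn (kite δ) v ≠ 0 := by
  intro h0
  have hvert : ∀ y ∈ ({e₁, (-δ) • e₁, δ • e₂, (-δ) • e₂} : Set (Eucl 2)), ⟪y, v⟫ ≤ 0 :=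
    fun y hy => h0 ▸ le_suppFn (isCompact_kite δ) (subset_convexHull ℝ _ hy) v
  have h₁ := hvert e₁ (by simp only [Set.mem_insert_iff, true_or])
  have h₂ := hvert ((-δ) • e₁) (by simp only [Set.mem_insert_iff, true_or, or_true])
  have h₃ := hvert (δ • e₂) (by simp only [Set.mem_insert_iff, true_or, or_true])
  have h₄ := hvert ((-δ) • e₂) (by simp only [Set.mem_insert_iff, Set.mem_singleton_iff, or_true])
  simp only [inner_smul_single_one_left, inner_single_one_left] at h₁ h₂ h₃ h₄
  refine hv ?_
  ext i
  fin_cases i <;> simp <;> nlinarith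

lemma EppF_kite {δ : ℝ} (hδ : 0 < δ) (p : ℝ) (u : Eucl 2) : EppF p (kite δ) u = 0 :=
  EppF_eq_zero_of_suppFn_ne_zero p
    (fun _ hv => suppFn_kite_ne_zero hδ (norm_ne_zero_iff.1 (hv ▸ one_ne_zero))) u

lemma IppF_kite_e₁ {p δ : ℝ} (hp : 0 ≤ p) (hδ : 0 ≤ δ) : IppF p (kite δ) e₁ = 1 := by
  rw [kite, IppF_convexHull_eq hp (x₀ := e₁) (by simp only [Set.mem_insert_iff, true_or])]
  · simp
  · rintro y (rfl | rfl | rfl | rfl) <;> simp; linarith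

lemma IppF_kite_neg_e₁ {p δ : ℝ} (hp : 0 ≤ p) (hδ : 0 ≤ δ) : IppF p (kite δ) (-e₁) = δ ^ p := by
  rw [kite, IppF_convexHull_eq hp (x₀ := (-δ) • e₁)
    (by simp only [Set.mem_insert_iff, true_or, or_true])]
  · simp [hδ]
  · rintro y (rfl | rfl | rfl | rfl) <;> simp <;> linarith

lemma abs_le_sphSup {n : ℕ} {f : Eucl n → ℝ} {C : ℝ} (hC : ∀ u : Eucl n, ‖u‖ = 1 → |f u| ≤ C)
    {u : Eucl n} (hu : ‖u‖ = 1) : |f u| ≤ sphSup f := by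
  refine le_ciSup (f := fun u : sphere (0 : Eucl n) 1 => |f u|) ⟨C, ?_⟩
    ⟨u, mem_sphere_zero_iff_norm.2 hu⟩
  rintro _ ⟨⟨v, hv⟩, rfl⟩
  exact hC v (mem_sphere_zero_iff_norm.1 hv)

lemma tendsto_zero_of_sphSup_lt {n : ℕ} {ι : Type*} {l : Filter ι} {F : ι → Eucl n → ℝ}
    (hF : ∀ ε > 0, ∀ᶠ i in l, sphSup (F i) < ε)
    (hbdd : ∀ᶠ i in l, ∃ C, ∀ u : Eucl n, ‖u‖ = 1 → |F i u| ≤ C) {u : Eucl n} (hu : ‖u‖ = 1) :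
    Tendsto (fun i => F i u) l (𝓝 0) := by
  refine Metric.tendsto_nhds.2 fun ε hε => ((hF ε hε).and hbdd).mono ?_
  rintro i ⟨hlt, C, hC⟩
  rw [Real.dist_eq, sub_zero]
  exact (abs_le_sphSup hC hu).trans_lt hlt

lemma tendsto_rpow_nhdsGT_zero {p : ℝ} (hp : 0 < p) :
    Tendsto (fun δ : ℝ => δ ^ p) (𝓝[>] 0) (𝓝 0) := by
  simpa [Real.zero_rpow hp.ne'] using
    (Real.continuousAt_rpow_const 0 p (Or.inr hp.le)).tendsto.mono_left nhdsWithin_le_nhds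

def mixedDiff {n : ℕ} (p c₁ c₂ : ℝ) (P : Set (Eucl n)) (u : Eucl n) : ℝ :=
  c₁ * (IppF p P u - EppF p P u) + c₂ * (ImpF p P u - EmpF p P u)

section MixedDiff

variable {p : ℝ} (c₁ c₂ : ℝ)

lemma mixedDiff_segment (hp : 0 < p) (u : Eucl 2) : mixedDiff p c₁ c₂ (segment ℝ 0 e₁) u = 0 := by
  simp only [mixedDiff, ImpF_eq_IppF_neg, EmpF_eq_EppF_neg, IppF_segment_zero hp.le,
    EppF_segment_e₁ hp, sub_self, mul_zero, add_zero]

lemma mixedDiff_kite {δ : ℝ} (hδ : 0 < δ) (u : Eucl 2) :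
    mixedDiff p c₁ c₂ (kite δ) u = c₁ * IppF p (kite δ) u + c₂ * IppF p (kite δ) (-u) := by
  simp only [mixedDiff, ImpF_eq_IppF_neg, EmpF_eq_EppF_neg, EppF_kite hδ, sub_zero]

lemma abs_mixedDiff_kite_le (hp : 0 ≤ p) {δ : ℝ} (hδ : 0 < δ) (hδ₁ : δ ≤ 1) {u : Eucl 2}
    (hu : ‖u‖ = 1) : |mixedDiff p c₁ c₂ (kite δ) u| ≤ |c₁| + |c₂| := by
  have hball := kite_subset_closedBall hδ.le hδ₁
  have ha := IppF_le_one hp hball hu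
  have hb := IppF_le_one hp hball ((norm_neg u).trans hu)
  have ha₀ := IppF_nonneg p (kite δ) u
  have hb₀ := IppF_nonneg p (kite δ) (-u)
  rw [mixedDiff_kite c₁ c₂ hδ]
  calc |c₁ * IppF p (kite δ) u + c₂ * IppF p (kite δ) (-u)|
      ≤ |c₁| * IppF p (kite δ) u + |c₂| * IppF p (kite δ) (-u) := by
        refine (abs_add_le _ _).trans_eq ?_
        rw [abs_mul, abs_mul, abs_of_nonneg ha₀, abs_of_nonneg hb₀]
    _ ≤ |c₁| * 1 + |c₂| * 1 := by gcongr
    _ = |c₁| + |c₂| := by rw [mul_one, mul_one]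

lemma tendsto_mixedDiff_kite_e₁ (hp : 0 < p) :
    Tendsto (fun δ => mixedDiff p c₁ c₂ (kite δ) e₁) (𝓝[>] 0) (𝓝 c₁) := by
  have h := ((tendsto_rpow_nhdsGT_zero hp).const_mul c₂).const_add c₁
  rw [mul_zero, add_zero] at h
  refine h.congr' ?_
  filter_upwards [self_mem_nhdsWithin] with δ (hδ : 0 < δ)
  rw [mixedDiff_kite c₁ c₂ hδ, IppF_kite_e₁ hp.le hδ.le, IppF_kite_neg_e₁ hp.le hδ.le, mul_one]

lemma tendsto_mixedDiff_kite_neg_e₁ (hp : 0 < p) :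
    Tendsto (fun δ => mixedDiff p c₁ c₂ (kite δ) (-e₁)) (𝓝[>] 0) (𝓝 c₂) := by
  have h := ((tendsto_rpow_nhdsGT_zero hp).const_mul c₁).add_const c₂
  rw [mul_zero, zero_add] at h
  refine h.congr' ?_
  filter_upwards [self_mem_nhdsWithin] with δ (hδ : 0 < δ)
  rw [mixedDiff_kite c₁ c₂ hδ, neg_neg, IppF_kite_e₁ hp.le hδ.le, IppF_kite_neg_e₁ hp.le hδ.le,
    mul_one]

end MixedDiff

/-- The only linear combination of `P ↦ h(I_p⁺P,·)^p − h(E_p⁺P,·)^p` and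
`P ↦ h(I_p⁻P,·)^p − h(E_p⁻P,·)^p` (as maps from `𝒫²_o` to `C_p(ℝ²)`) that is continuous at
the line segment `[o, e₁]` is the trivial one. -/
theorem statement_7 (p : ℝ) (hp : 1 < p) (c₁ c₂ : ℝ)
    (G : Set (Eucl 2) → Eucl 2 → ℝ)
    (hG : ∀ (P : Set (Eucl 2)) (u : Eucl 2),
      G P u = c₁ * (IppF p P u - EppF p P u) + c₂ * (ImpF p P u - EmpF p P u))
    (hcont : ∀ ε > (0:ℝ), ∃ δ > (0:ℝ), ∀ P : Set (Eucl 2), IsPolytopeO P →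
      hausdorffDist P (segment ℝ (0 : Eucl 2) (EuclideanSpace.single (0 : Fin 2) (1:ℝ))) < δ →
      sphSup (fun u =>
        G P u - G (segment ℝ (0 : Eucl 2) (EuclideanSpace.single (0 : Fin 2) (1:ℝ))) u) < ε) :
    c₁ = 0 ∧ c₂ = 0 := by
  have hp₀ : 0 < p := by linarith
  obtain rfl : G = mixedDiff p c₁ c₂ := funext fun P => funext (hG P)
  have hsmall : ∀ ε > 0, ∀ᶠ δ in 𝓝[>] 0, sphSup (mixedDiff p c₁ c₂ (kite δ)) < ε := by
    intro ε hε
    obtain ⟨δ₀, hδ₀, hclose⟩ := hcont ε hε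
    filter_upwards [Ioo_mem_nhdsGT hδ₀] with δ hδ
    simpa only [mixedDiff_segment c₁ c₂ hp₀, sub_zero] using hclose _ (isPolytopeO_kite δ)
      ((hausdorffDist_kite_segment_le hδ.1.le).trans_lt hδ.2)
  have hbdd : ∀ᶠ δ in 𝓝[>] 0, ∃ C, ∀ u : Eucl 2, ‖u‖ = 1 → |mixedDiff p c₁ c₂ (kite δ) u| ≤ C := by
    filter_upwards [Ioc_mem_nhdsGT one_pos] with δ hδ
    exact ⟨_, fun u hu => abs_mixedDiff_kite_le c₁ c₂ hp₀.le hδ.1 hδ.2 hu⟩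
  exact ⟨tendsto_nhds_unique (tendsto_mixedDiff_kite_e₁ c₁ c₂ hp₀)
      (tendsto_zero_of_sphSup_lt hsmall hbdd (by simp)),
    tendsto_nhds_unique (tendsto_mixedDiff_kite_neg_e₁ c₁ c₂ hp₀)
      (tendsto_zero_of_sphSup_lt hsmall hbdd (by simp))⟩
end
end

section
/- Let n ≥ 2 and p > 1. If Φ : P^n_o → C_p(R^n) is SL(n)-covariant, then Φ(P)(x) = Φ(P)(π_P x) for all P ∈ P^n_o and all x ∈ R^n, where π_P denotes the orthogonal projection of R^n onto the linear hull of P. In particular, an SL(n)-covariant Φ maps a polytope contained in a linear subspace to a function determined by that subspace. -/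
open MeasureTheory Metric
open scoped RealInnerProductSpace Pointwise

noncomputable section

/-! If `w ⊥ lin P` and `⟪v, w⟫ = 0`, the transvection `φ x = x + ⟪w, x⟫ • v` fixes `P`
pointwise and has determinant `1 + ⟪w, v⟫ = 1`, while its adjoint is `y ↦ y + ⟪v, y⟫ • w`.
For `y` off the line `ℝ • w` one can pick `v ⊥ w` with `⟪v, y⟫ = 1`, so covariance gives
`Φ P (y + w) = Φ P y`. Since `n ≥ 2` these `y` are dense, and continuity of `Φ P` extends
the identity to all `y`; taking `w = x - π_P x` gives the theorem. -/

section Transvection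

open Module

variable {E : Type*} [NormedAddCommGroup E] [InnerProductSpace ℝ E]

theorem adjoint_transvection_innerₗ [FiniteDimensional ℝ E] (w v : E) :
    LinearMap.adjoint (LinearMap.transvection (innerₗ E w) v) =
      LinearMap.transvection (innerₗ E v) w := by
  refine ((LinearMap.eq_adjoint_iff _ _).mpr fun x y => ?_).symm
  simp only [LinearMap.transvection.apply, innerₗ_apply_apply, inner_add_left, inner_add_right,
    real_inner_smul_right, real_inner_comm]
  ring

theorem exists_inner_eq_zero_and_inner_eq_one {w y : E}
    (hy : y ∉ Set.range (fun t : ℝ => t • w)) : ∃ v : E, ⟪w, v⟫ = 0 ∧ ⟪v, y⟫ = 1 := by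
  set K := ℝ ∙ w
  set u := y - K.starProjection y
  have hu : u ∈ Kᗮ := K.sub_starProjection_mem_orthogonal y
  have hu_ne : u ≠ 0 := by
    rw [Ne, sub_eq_zero]
    intro h
    have hyK : y ∈ K := h ▸ K.starProjection_apply_mem y
    rw [← SetLike.mem_coe, Submodule.span_singleton_eq_range] at hyK
    exact hy hyK
  have huy : ⟪u, y⟫ = ⟪u, u⟫ := by
    conv_lhs => rw [← sub_add_cancel y (K.starProjection y)]
    rw [inner_add_right, Submodule.inner_left_of_mem_orthogonal (K.starProjection_apply_mem y) hu,
      add_zero]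
  refine ⟨⟪u, u⟫⁻¹ • u, ?_, ?_⟩
  · rw [real_inner_smul_right, Submodule.mem_orthogonal_singleton_iff_inner_right.mp hu, mul_zero]
  · rw [real_inner_smul_left, huy, inv_mul_cancel₀ (inner_self_ne_zero.mpr hu_ne)]

variable [FiniteDimensional ℝ E]

def InvariantUnderFixingSL (K : Submodule ℝ E) (f : E → ℝ) : Prop :=
  ∀ φ : E →ₗ[ℝ] E, LinearMap.det φ = 1 → (∀ z ∈ K, φ z = z) → f ∘ LinearMap.adjoint φ = f

variable {K : Submodule ℝ E} {f : E → ℝ}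

theorem apply_add_eq_of_invariantUnderFixingSL (hinv : InvariantUnderFixingSL K f)
    {w : E} (hw : w ∈ Kᗮ) {y : E} (hy : y ∉ Set.range (fun t : ℝ => t • w)) :
    f (y + w) = f y := by
  obtain ⟨v, hwv, hvy⟩ := exists_inner_eq_zero_and_inner_eq_one hy
  have hdet : LinearMap.det (LinearMap.transvection (innerₗ E w) v) = 1 := by
    rw [LinearMap.transvection.det, innerₗ_apply_apply, hwv, add_zero]
  have hfix : ∀ z ∈ K, LinearMap.transvection (innerₗ E w) v z = z := fun z hz => by
    rw [LinearMap.transvection.apply, innerₗ_apply_apply,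
      Submodule.inner_left_of_mem_orthogonal hz hw, zero_smul, add_zero]
  have := congrFun (hinv _ hdet hfix) y
  rwa [Function.comp_apply, adjoint_transvection_innerₗ, LinearMap.transvection.apply,
    innerₗ_apply_apply, hvy, one_smul] at this

theorem apply_add_eq_of_mem_orthogonal (hE : 2 ≤ finrank ℝ E) (hf : Continuous f)
    (hinv : InvariantUnderFixingSL K f) {w : E} (hw : w ∈ Kᗮ) (y : E) : f (y + w) = f y := by
  have hdense : Dense (Set.range (fun t : ℝ => t • w))ᶜ :=
    ContDiff.dense_compl_range_of_finrank_lt_finrank (by fun_prop)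
      (by rw [finrank_self]; omega)
  have hext : (fun y => f (y + w)) = f :=
    Continuous.ext_on hdense (hf.comp (continuous_add_const w)) hf fun _ hy =>
      apply_add_eq_of_invariantUnderFixingSL hinv hw hy
  exact congrFun hext y

theorem apply_eq_apply_starProjection_of_invariantUnderFixingSL (hE : 2 ≤ finrank ℝ E)
    (hf : Continuous f) (hinv : InvariantUnderFixingSL K f) (x : E) :
    f x = f (K.starProjection x) := by
  simpa using apply_add_eq_of_mem_orthogonal hE hf hinv (K.sub_starProjection_mem_orthogonal x)
    (K.starProjection x)

end Transvection

theorem statement_12_general (n : ℕ) (hn : 2 ≤ n) (p : ℝ)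
    (Φ : Set (Eucl n) → Eucl n → ℝ)
    (hCp : ∀ P : Set (Eucl n), IsPolytopeO P → Continuous (Φ P) ∧
      ∀ s : ℝ, 0 < s → ∀ u : Eucl n, Φ P (s • u) = s ^ p * Φ P u)
    (hcov : ∀ P : Set (Eucl n), IsPolytopeO P →
      ∀ φ : Eucl n →ₗ[ℝ] Eucl n, LinearMap.det φ = 1 →
        Φ (φ '' P) = Φ P ∘ LinearMap.adjoint φ) :
    ∀ P : Set (Eucl n), IsPolytopeO P → ∀ x : Eucl n,
      Φ P x = Φ P (Submodule.orthogonalProjection (Submodule.span ℝ P) x : Eucl n) := by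
  intro P hP x
  refine apply_eq_apply_starProjection_of_invariantUnderFixingSL (by simpa using hn)
    (hCp P hP).1 (fun φ hφ hfix => ?_) x
  have hPφ : φ '' P = P := by
    rw [Set.image_congr fun z hz => hfix z (Submodule.subset_span hz), Set.image_id']
  rw [← hcov P hP φ hφ, hPφ]

/-- For `n ≥ 2`, an `SL(n)`-covariant map `Φ : 𝒫ⁿ_o → C_p(ℝⁿ)`
satisfies `Φ(P)(x) = Φ(P)(π_P x)`, where `π_P` is the orthogonal projection onto the
linear hull of `P`. -/
theorem statement_12 (n : ℕ) (hn : 2 ≤ n) (p : ℝ) (hp : 1 < p)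
    (Φ : Set (Eucl n) → Eucl n → ℝ)
    (hCp : ∀ P : Set (Eucl n), IsPolytopeO P → Continuous (Φ P) ∧
      ∀ s : ℝ, 0 < s → ∀ u : Eucl n, Φ P (s • u) = s ^ p * Φ P u)
    (hcov : ∀ P : Set (Eucl n), IsPolytopeO P →
      ∀ φ : Eucl n →ₗ[ℝ] Eucl n, LinearMap.det φ = 1 →
        Φ (φ '' P) = Φ P ∘ LinearMap.adjoint φ) :
    ∀ P : Set (Eucl n), IsPolytopeO P → ∀ x : Eucl n,
      Φ P x = Φ P (Submodule.orthogonalProjection (Submodule.span ℝ P) x : Eucl n) :=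
  statement_12_general n hn p Φ hCp hcov
end
end
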